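/- arXiv:1710.07517 — 5 statements merged into one kernel-verified Lean document; each statement's English description precedes it below -/
import Mathlib

section
/- Let A be a finite-dimensional selfinjective K-algebra, I an ideal of A with IeI = 0 where e is a residual identity of B = A/I. If the left annihilator l_A(I) equals Ie, then the socle of A is contained in I. -/
/-- Let `A` be a finite-dimensional selfinjective `K`-algebra, `I` a
two-sided ideal, `e` a residual identity of `B = A/I` (i.e. an idempotent with
`e + I` the identity of `A/I`), with `IeI = 0`.  If `l_A(I) = Ie`, then the socle
of `A` (the sum of all simple right ideals, i.e. simple `Aᵐᵒᵖ`-submodules of `A`)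
is contained in `I`. -/
theorem stmt_2 (K A : Type) [Field K] [Ring A] [Algebra K A] [FiniteDimensional K A]
    (hself : Module.Injective Aᵐᵒᵖ A)
    (I : TwoSidedIdeal A) (e : A) (he : e * e = e)
    (hres : ∀ a : A, a * e - a ∈ I ∧ e * a - a ∈ I)
    (hIeI : ∀ x ∈ I, ∀ y ∈ I, x * e * y = 0)
    (hl : {a : A | ∀ x ∈ I, a * x = 0} = {y : A | ∃ x ∈ I, y = x * e}) :
    ∀ a ∈ sSup {S : Submodule Aᵐᵒᵖ A | IsSimpleModule Aᵐᵒᵖ S}, a ∈ I := by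
  -- view `I` as an `Aᵐᵒᵖ`-submodule (right ideal) of `A`
  let N : Submodule Aᵐᵒᵖ A :=
    { carrier := {a | a ∈ I}
      add_mem' := fun ha hb => I.add_mem ha hb
      zero_mem' := I.zero_mem
      smul_mem' := fun c a ha => by
        show c • a ∈ I
        rw [MulOpposite.smul_eq_mul_unop]
        exact I.mul_mem_right _ _ ha }
  have key : sSup {S : Submodule Aᵐᵒᵖ A | IsSimpleModule Aᵐᵒᵖ S} ≤ N := by
    refine sSup_le ?_
    intro S hS
    haveI : IsSimpleModule Aᵐᵒᵖ S := hS
    rcases eq_bot_or_eq_top (N.comap S.subtype) with hbot | htop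
    · -- S ∩ I = 0, so S · I = 0, so S ⊆ l_A(I) = Ie ⊆ I
      intro s hs
      have hs0 : ∀ x ∈ I, s * x = 0 := by
        intro x hx
        have hsxS : s * x ∈ S := by
          have := S.smul_mem (MulOpposite.op x) hs
          rwa [op_smul_eq_mul] at this
        have hsxI : s * x ∈ N := I.mul_mem_left _ _ hx
        have : (⟨s * x, hsxS⟩ : S) ∈ N.comap S.subtype := hsxI
        rw [hbot] at this
        exact congrArg Subtype.val this
      have : s ∈ {a : A | ∀ x ∈ I, a * x = 0} := hs0
      rw [hl] at this
      obtain ⟨x, hx, rfl⟩ := this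
      exact I.mul_mem_right _ _ hx
    · intro s hs
      have : (⟨s, hs⟩ : S) ∈ N.comap S.subtype := htop ▸ Submodule.mem_top
      exact this
  intro a ha
  exact key ha
end

section
/- Let A be a finite-dimensional algebra, I an ideal of A, e an idempotent of A, and suppose the canonical map eAe → eAe/eIe admits an algebra section (retraction). Define A[I] as the K-vector space (eAe/eIe) ⊕ I with multiplication (b,x)·(c,y) = (bc, by + xc + xy), where I is regarded as an (eAe/eIe)-bimodule. Then A[I] is an associative K-algebra with identity element (e + eIe, 1_A − e), and the subset {(0,x) | x ∈ I} is a two-sided ideal of A[I] isomorphic to I. -/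
variable (K A : Type) [Field K] [Ring A] [Algebra K A]

/-- The corner space `eAe = {x | e*x*e = x}` as a `K`-subspace of `A`. -/
def corner (e : A) : Submodule K A where
  carrier := {x | e * x * e = x}
  add_mem' := by
    intro x y hx hy
    simp only [Set.mem_setOf_eq] at *
    rw [mul_add, add_mul, hx, hy]
  zero_mem' := by simp
  smul_mem' := by
    intro k x hx
    simp only [Set.mem_setOf_eq] at *
    rw [mul_smul_comm, smul_mul_assoc, hx]

/-- A two-sided ideal `I`, viewed as a `K`-subspace of `A`. -/
def ISub (I : TwoSidedIdeal A) : Submodule K A where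
  carrier := I
  add_mem' hx hy := I.add_mem hx hy
  zero_mem' := I.zero_mem
  smul_mem' k x hx := by
    rw [Algebra.smul_def]
    exact I.mul_mem_left _ _ hx

/-- The subspace `eIe` of `A`. -/
def eIeSub (I : TwoSidedIdeal A) (e : A) : Submodule K A where
  carrier := {z | ∃ y ∈ I, z = e * y * e}
  add_mem' := by
    rintro x y ⟨y₁, hy₁, rfl⟩ ⟨y₂, hy₂, rfl⟩
    exact ⟨y₁ + y₂, I.add_mem hy₁ hy₂, by rw [mul_add, add_mul]⟩
  zero_mem' := ⟨0, I.zero_mem, by simp⟩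
  smul_mem' := by
    rintro k x ⟨y, hy, rfl⟩
    refine ⟨k • y, ?_, by rw [mul_smul_comm, smul_mul_assoc]⟩
    rw [Algebra.smul_def]
    exact I.mul_mem_left _ _ hy

lemma corner_mul_mem {e : A} (he : e * e = e) {x y : A}
    (hx : x ∈ corner K A e) (hy : y ∈ corner K A e) : x * y ∈ corner K A e := by
  have hx' : e * x * e = x := hx
  have hy' : e * y * e = y := hy
  have h1 : e * x = x := by rw [← hx', ← mul_assoc, ← mul_assoc, he]
  have h2 : y * e = y := by rw [← hy', mul_assoc, he]
  show e * (x * y) * e = x * y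
  rw [← mul_assoc, h1, mul_assoc, h2]

lemma e_mem_corner {e : A} (he : e * e = e) : e ∈ corner K A e := by
  show e * e * e = e
  rw [he, he]

/-- The quotient `eAe / eIe`, i.e. the algebra `B ≅ A/I`, as a `K`-vector space. -/
abbrev CornerQuot (I : TwoSidedIdeal A) (e : A) : Type :=
  ↥(corner K A e) ⧸ ((eIeSub K A I e).comap (corner K A e).subtype)

/-- The underlying `K`-vector space `(eAe/eIe) ⊕ I` of the algebra `A[I]`. -/
abbrev AICarrier (I : TwoSidedIdeal A) (e : A) : Type :=
  CornerQuot K A I e × ↥(ISub K A I)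

/-- The multiplication `(b,x)·(c,y) = (bc, by + xc + xy)` of `A[I]`, where the
bimodule actions of `eAe/eIe` on `I` are given by `lact` and `ract` and the
multiplication of `eAe/eIe` by `mQ`. -/
noncomputable def aiMul (I : TwoSidedIdeal A) (e : A)
    (mQ : CornerQuot K A I e → CornerQuot K A I e → CornerQuot K A I e)
    (lact : CornerQuot K A I e → A → A) (ract : A → CornerQuot K A I e → A)
    (hlactI : ∀ b y, y ∈ ISub K A I → lact b y ∈ ISub K A I)
    (hractI : ∀ y b, y ∈ ISub K A I → ract y b ∈ ISub K A I)
    (p q : AICarrier K A I e) : AICarrier K A I e :=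
  (mQ p.1 q.1,
    ⟨lact p.1 q.2.1 + ract p.2.1 q.1 + p.2.1 * q.2.1,
      Submodule.add_mem _
        (Submodule.add_mem _ (hlactI _ _ q.2.2) (hractI _ _ p.2.2))
        (I.mul_mem_left _ _ q.2.2)⟩)

/-! Every class in `eAe/eIe` is represented by some `a ∈ eAe`, and on representatives the product
is `(a, x)·(b, y) = (ab, ay + xb + xy)`: the product `(a + x)(b + y)` in `A`, split into its
`eAe`-part and its `I`-part. So associativity and bilinearity are identities in `A`, and
`(e, 1 - e)` is the identity because `e` is a two-sided unit of `eAe`. -/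

section InducedMul

variable {K A} {I : TwoSidedIdeal A} {e : A}

structure IsInducedByMul (he : e * e = e)
    (mQ : CornerQuot K A I e → CornerQuot K A I e → CornerQuot K A I e)
    (lact : CornerQuot K A I e → A → A) (ract : A → CornerQuot K A I e → A) : Prop where
  mQ_mk : ∀ x y : ↥(corner K A e),
    mQ (Submodule.Quotient.mk x) (Submodule.Quotient.mk y) =
      Submodule.Quotient.mk ⟨x.1 * y.1, corner_mul_mem K A he x.2 y.2⟩
  lact_mk : ∀ (x : ↥(corner K A e)) (y : A), lact (Submodule.Quotient.mk x) y = x.1 * y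
  ract_mk : ∀ (y : A) (x : ↥(corner K A e)), ract y (Submodule.Quotient.mk x) = y * x.1

theorem idem_mul_of_mem_corner (he : e * e = e) {x : A} (hx : x ∈ corner K A e) : e * x = x := by
  have hx' : e * x * e = x := hx
  rw [← hx', ← mul_assoc, ← mul_assoc, he]

theorem mul_idem_of_mem_corner (he : e * e = e) {x : A} (hx : x ∈ corner K A e) : x * e = x := by
  have hx' : e * x * e = x := hx
  rw [← hx', mul_assoc, he]

@[elab_as_elim]
theorem AICarrier.induction_on {motive : AICarrier K A I e → Prop} (p : AICarrier K A I e)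
    (mk : ∀ (a : ↥(corner K A e)) (x : ↥(ISub K A I)), motive (Submodule.Quotient.mk a, x)) :
    motive p := by
  obtain ⟨q, x⟩ := p
  obtain ⟨a, rfl⟩ := Submodule.Quotient.mk_surjective _ q
  exact mk a x

theorem CornerQuot.mk_eq_mk {a b : ↥(corner K A e)} (h : (a : A) = b) :
    (Submodule.Quotient.mk a : CornerQuot K A I e) = Submodule.Quotient.mk b :=
  congrArg _ (Subtype.ext h)

variable {he : e * e = e}
  {mQ : CornerQuot K A I e → CornerQuot K A I e → CornerQuot K A I e}
  {lact : CornerQuot K A I e → A → A} {ract : A → CornerQuot K A I e → A}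
  {hlactI : ∀ b y, y ∈ ISub K A I → lact b y ∈ ISub K A I}
  {hractI : ∀ y b, y ∈ ISub K A I → ract y b ∈ ISub K A I}

local notation "𝔪" => aiMul K A I e mQ lact ract hlactI hractI

theorem aiMul_mk (h : IsInducedByMul he mQ lact ract) (a b : ↥(corner K A e))
    (x y : ↥(ISub K A I)) :
    𝔪 (Submodule.Quotient.mk a, x) (Submodule.Quotient.mk b, y) =
      (Submodule.Quotient.mk ⟨a.1 * b.1, corner_mul_mem K A he a.2 b.2⟩,
        ⟨a.1 * y.1 + x.1 * b.1 + x.1 * y.1,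
          I.add_mem (I.add_mem (I.mul_mem_left _ _ y.2) (I.mul_mem_right _ _ x.2))
            (I.mul_mem_left _ _ y.2)⟩) := by
  simp only [aiMul, h.mQ_mk, h.lact_mk, h.ract_mk]

theorem aiMul_assoc (h : IsInducedByMul he mQ lact ract) (p q r : AICarrier K A I e) :
    𝔪 (𝔪 p q) r = 𝔪 p (𝔪 q r) := by
  induction p using AICarrier.induction_on with | mk a x => ?_
  induction q using AICarrier.induction_on with | mk b y => ?_
  induction r using AICarrier.induction_on with | mk c z => ?_
  simp only [aiMul_mk h, mul_assoc]
  refine Prod.ext rfl (Subtype.ext ?_)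
  noncomm_ring

theorem aiMul_one_mul (h : IsInducedByMul he mQ lact ract) (h1 : 1 - e ∈ ISub K A I)
    (p : AICarrier K A I e) :
    𝔪 (Submodule.Quotient.mk ⟨e, e_mem_corner K A he⟩, ⟨1 - e, h1⟩) p = p := by
  induction p using AICarrier.induction_on with | mk a x => ?_
  rw [aiMul_mk h]
  have hea : e * a = a := idem_mul_of_mem_corner he a.2
  refine Prod.ext (CornerQuot.mk_eq_mk hea) (Subtype.ext ?_)
  simp only [sub_mul, one_mul, hea]
  abel

theorem aiMul_mul_one (h : IsInducedByMul he mQ lact ract) (h1 : 1 - e ∈ ISub K A I)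
    (p : AICarrier K A I e) :
    𝔪 p (Submodule.Quotient.mk ⟨e, e_mem_corner K A he⟩, ⟨1 - e, h1⟩) = p := by
  induction p using AICarrier.induction_on with | mk a x => ?_
  rw [aiMul_mk h]
  have hae : a * e = a := mul_idem_of_mem_corner he a.2
  refine Prod.ext (CornerQuot.mk_eq_mk hae) (Subtype.ext ?_)
  simp only [mul_sub, mul_one, hae]
  abel

theorem AICarrier.mk_add_mk (a b : ↥(corner K A e)) (x y : ↥(ISub K A I)) :
    ((Submodule.Quotient.mk a, x) + (Submodule.Quotient.mk b, y) : AICarrier K A I e) =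
      (Submodule.Quotient.mk (a + b), x + y) := rfl

theorem AICarrier.smul_mk (k : K) (a : ↥(corner K A e)) (x : ↥(ISub K A I)) :
    k • ((Submodule.Quotient.mk a, x) : AICarrier K A I e) =
      (Submodule.Quotient.mk (k • a), k • x) := rfl

theorem aiMul_add (h : IsInducedByMul he mQ lact ract) (p q r : AICarrier K A I e) :
    𝔪 p (q + r) = 𝔪 p q + 𝔪 p r := by
  induction p using AICarrier.induction_on with | mk a x => ?_
  induction q using AICarrier.induction_on with | mk b y => ?_
  induction r using AICarrier.induction_on with | mk c z => ?_
  simp only [AICarrier.mk_add_mk, aiMul_mk h]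
  refine Prod.ext (CornerQuot.mk_eq_mk (mul_add _ _ _)) (Subtype.ext ?_)
  simp only [Submodule.coe_add, mul_add]
  abel

theorem add_aiMul (h : IsInducedByMul he mQ lact ract) (p q r : AICarrier K A I e) :
    𝔪 (p + q) r = 𝔪 p r + 𝔪 q r := by
  induction p using AICarrier.induction_on with | mk a x => ?_
  induction q using AICarrier.induction_on with | mk b y => ?_
  induction r using AICarrier.induction_on with | mk c z => ?_
  simp only [AICarrier.mk_add_mk, aiMul_mk h]
  refine Prod.ext (CornerQuot.mk_eq_mk (add_mul _ _ _)) (Subtype.ext ?_)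
  simp only [Submodule.coe_add, add_mul]
  abel

theorem smul_aiMul (h : IsInducedByMul he mQ lact ract) (k : K) (p q : AICarrier K A I e) :
    𝔪 (k • p) q = k • 𝔪 p q := by
  induction p using AICarrier.induction_on with | mk a x => ?_
  induction q using AICarrier.induction_on with | mk b y => ?_
  simp only [AICarrier.smul_mk, aiMul_mk h]
  refine Prod.ext (CornerQuot.mk_eq_mk (smul_mul_assoc _ _ _)) (Subtype.ext ?_)
  simp only [Submodule.coe_smul, smul_add, smul_mul_assoc]

theorem aiMul_smul (h : IsInducedByMul he mQ lact ract) (k : K) (p q : AICarrier K A I e) :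
    𝔪 p (k • q) = k • 𝔪 p q := by
  induction p using AICarrier.induction_on with | mk a x => ?_
  induction q using AICarrier.induction_on with | mk b y => ?_
  simp only [AICarrier.smul_mk, aiMul_mk h]
  refine Prod.ext (CornerQuot.mk_eq_mk (mul_smul_comm _ _ _)) (Subtype.ext ?_)
  simp only [Submodule.coe_smul, smul_add, mul_smul_comm]

theorem IsInducedByMul.zero_mQ (h : IsInducedByMul he mQ lact ract) (q : CornerQuot K A I e) :
    mQ 0 q = 0 := by
  obtain ⟨b, rfl⟩ := Submodule.Quotient.mk_surjective _ q
  rw [← Submodule.Quotient.mk_zero, h.mQ_mk]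
  simp

theorem IsInducedByMul.mQ_zero (h : IsInducedByMul he mQ lact ract) (q : CornerQuot K A I e) :
    mQ q 0 = 0 := by
  obtain ⟨b, rfl⟩ := Submodule.Quotient.mk_surjective _ q
  rw [← Submodule.Quotient.mk_zero, h.mQ_mk]
  simp

end InducedMul

theorem stmt_4 (I : TwoSidedIdeal A) (e : A)
    (he : e * e = e)
    (hres : ∀ a : A, a * e - a ∈ I ∧ e * a - a ∈ I)
    (mQ : CornerQuot K A I e → CornerQuot K A I e → CornerQuot K A I e)
    (hmQ : ∀ x y : ↥(corner K A e),
      mQ (Submodule.Quotient.mk x) (Submodule.Quotient.mk y) =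
        Submodule.Quotient.mk ⟨x.1 * y.1, corner_mul_mem K A he x.2 y.2⟩)
    (lact : CornerQuot K A I e → A → A)
    (hlact : ∀ (x : ↥(corner K A e)) (y : A),
      lact (Submodule.Quotient.mk x) y = x.1 * y)
    (ract : A → CornerQuot K A I e → A)
    (hract : ∀ (y : A) (x : ↥(corner K A e)),
      ract y (Submodule.Quotient.mk x) = y * x.1)
    (hlactI : ∀ b y, y ∈ ISub K A I → lact b y ∈ ISub K A I)
    (hractI : ∀ y b, y ∈ ISub K A I → ract y b ∈ ISub K A I) :
    letI m := aiMul K A I e mQ lact ract hlactI hractI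
    letI one : AICarrier K A I e :=
      (Submodule.Quotient.mk ⟨e, e_mem_corner K A he⟩,
        ⟨1 - e, by
          have h := (hres 1).2
          rw [mul_one] at h
          exact (show 1 - e ∈ I by simpa using I.neg_mem h)⟩)
    (∀ p q r : AICarrier K A I e, m (m p q) r = m p (m q r)) ∧
    (∀ p : AICarrier K A I e, m one p = p ∧ m p one = p) ∧
    (∀ p q r : AICarrier K A I e,
      m p (q + r) = m p q + m p r ∧ m (p + q) r = m p r + m q r) ∧
    (∀ (k : K) (p q : AICarrier K A I e),
      m (k • p) q = k • m p q ∧ m p (k • q) = k • m p q) ∧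
    (∀ p q : AICarrier K A I e, p.1 = 0 → (m p q).1 = 0 ∧ (m q p).1 = 0) ∧
    (Function.Injective
        (fun x : ↥(ISub K A I) => (((0 : CornerQuot K A I e), x) : AICarrier K A I e)) ∧
      (∀ x y : ↥(ISub K A I),
        (((0 : CornerQuot K A I e), x + y) : AICarrier K A I e) =
          ((0 : CornerQuot K A I e), x) + ((0 : CornerQuot K A I e), y)) ∧
      Set.range
          (fun x : ↥(ISub K A I) => (((0 : CornerQuot K A I e), x) : AICarrier K A I e)) =
        {p : AICarrier K A I e | p.1 = 0}) := by
  have h : IsInducedByMul he mQ lact ract := ⟨hmQ, hlact, hract⟩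
  refine ⟨aiMul_assoc h, fun p => ⟨aiMul_one_mul h _ p, aiMul_mul_one h _ p⟩,
    fun p q r => ⟨aiMul_add h p q r, add_aiMul h p q r⟩,
    fun k p q => ⟨smul_aiMul h k p q, aiMul_smul h k p q⟩,
    fun p q hp => ⟨?_, ?_⟩, fun x y hxy => congrArg Prod.snd hxy,
    fun x y => by rw [Prod.mk_add_mk, add_zero], ?_⟩
  · show mQ p.1 q.1 = 0
    rw [hp, h.zero_mQ]
  · show mQ q.1 p.1 = 0
    rw [hp, h.mQ_zero]
  · ext p
    exact ⟨by rintro ⟨x, rfl⟩; rfl, fun hp => ⟨p.2, Prod.ext hp.symm rfl⟩⟩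
end

section
/- Let A be a finite-dimensional algebra such that the module category mod A admits no short cycle, and let P be an indecomposable projective right A-module. If top(P) ≅ soc(P), then P is simple. Consequently, for a nonsimple selfinjective algebra A without short cycles, the Nakayama permutation ν satisfies ν(i) ≠ i for every vertex i. -/
/-- A nonzero module with no nontrivial direct sum decomposition. -/
def IsIndecomposableModule (A : Type) [Ring A] (M : Type) [AddCommGroup M]
    [Module A M] : Prop :=
  (⊤ : Submodule A M) ≠ ⊥ ∧ ∀ N P : Submodule A M, IsCompl N P → N = ⊥ ∨ P = ⊥

/-- `mod A` has no short cycles: there is no pair of nonzero nonisomorphisms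
`X → Y → X` between finite-dimensional indecomposable right `A`-modules. -/
def NoShortCycles (K A : Type) [Field K] [Ring A] [Algebra K A] : Prop :=
  ∀ (X Y : Type) [AddCommGroup X] [Module Aᵐᵒᵖ X] [Module K X]
    [IsScalarTower K Aᵐᵒᵖ X] [FiniteDimensional K X]
    [AddCommGroup Y] [Module Aᵐᵒᵖ Y] [Module K Y]
    [IsScalarTower K Aᵐᵒᵖ Y] [FiniteDimensional K Y],
    IsIndecomposableModule Aᵐᵒᵖ X → IsIndecomposableModule Aᵐᵒᵖ Y →
    ∀ (f : X →ₗ[Aᵐᵒᵖ] Y) (g : Y →ₗ[Aᵐᵒᵖ] X),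
      f ≠ 0 → ¬Function.Bijective f → g ≠ 0 → ¬Function.Bijective g → False

/-- The radical `rad M = J(A) • M` of a module. -/
def radSub (A : Type) [Ring A] (M : Type) [AddCommGroup M] [Module A M] :
    Submodule A M :=
  (⊥ : Ideal A).jacobson • (⊤ : Submodule A M)

/-- The socle of a module: the sum of all its simple submodules. -/
def socSub (A : Type) [Ring A] (M : Type) [AddCommGroup M] [Module A M] :
    Submodule A M :=
  sSup {S : Submodule A M | IsSimpleModule A S}


/-- The Jacobson radical of the ring kills every simple quotient:
`J(R) • ⊤ ≤ m` for every coatom (maximal submodule) `m`. -/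
lemma jacobson_smul_top_le_coatom {R M : Type*} [Ring R] [AddCommGroup M] [Module R M]
    {m : Submodule R M} (hm : IsCoatom m) :
    (⊥ : Ideal R).jacobson • (⊤ : Submodule R M) ≤ m := by
  rw [Submodule.smul_le]
  intro r hr p _
  by_cases hp : p ∈ m
  · exact m.smul_mem r hp
  · haveI hQ : IsSimpleModule R (M ⧸ m) := isSimpleModule_iff_isCoatom.mpr hm
    set q : M ⧸ m := Submodule.Quotient.mk p with hq
    have hq0 : q ≠ 0 := by
      simpa [hq, Submodule.Quotient.mk_eq_zero] using hp
    let φ : R →ₗ[R] (M ⧸ m) := LinearMap.toSpanSingleton R (M ⧸ m) q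
    have hφs : Function.Surjective φ := by
      have hrange : LinearMap.range φ = ⊤ := by
        rcases eq_bot_or_eq_top (LinearMap.range φ) with h | h
        · exfalso
          apply hq0
          have : φ 1 ∈ LinearMap.range φ := ⟨1, rfl⟩
          rw [h, Submodule.mem_bot] at this
          simpa [φ, LinearMap.toSpanSingleton, LinearMap.smulRight] using this
        · exact h
      exact LinearMap.range_eq_top.mp hrange
    have hker : Ideal.IsMaximal (LinearMap.ker φ) :=
      Ideal.isMaximal_def.mpr (LinearMap.isCoatom_ker_of_surjective hφs)
    have hrker : r ∈ LinearMap.ker φ := by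
      have := Ideal.mem_sInf.mp hr (I := LinearMap.ker φ) ⟨bot_le, hker⟩
      exact this
    have : r • q = 0 := hrker
    rw [← Submodule.Quotient.mk_eq_zero]
    simpa [hq, Submodule.Quotient.mk_smul] using this

/-- Let `A` be a finite-dimensional algebra whose module category has no
short cycle, and `P` an indecomposable projective finite-dimensional right `A`-module.
If `top P ≅ soc P` then `P` is simple.  Consequently, if moreover `A` is selfinjective
and `P` is not simple, then `top P ≇ soc P` (i.e. the Nakayama permutation has no fixed
point). -/
theorem stmt_8 (K A : Type) [Field K] [Ring A] [Algebra K A] [FiniteDimensional K A]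
    (hnsc : NoShortCycles K A)
    (P : Type) [AddCommGroup P] [Module Aᵐᵒᵖ P] [Module K P]
    [IsScalarTower K Aᵐᵒᵖ P] [FiniteDimensional K P]
    (hproj : Module.Projective Aᵐᵒᵖ P) (hind : IsIndecomposableModule Aᵐᵒᵖ P) :
    (Nonempty ((P ⧸ radSub Aᵐᵒᵖ P) ≃ₗ[Aᵐᵒᵖ] ↥(socSub Aᵐᵒᵖ P)) →
      IsSimpleModule Aᵐᵒᵖ P) ∧
    (Module.Injective Aᵐᵒᵖ A → ¬IsSimpleModule Aᵐᵒᵖ P →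
      ¬Nonempty ((P ⧸ radSub Aᵐᵒᵖ P) ≃ₗ[Aᵐᵒᵖ] ↥(socSub Aᵐᵒᵖ P))) := by
  haveI hfin : Module.Finite Aᵐᵒᵖ P := Module.Finite.of_restrictScalars_finite K Aᵐᵒᵖ P
  have h1 : Nonempty ((P ⧸ radSub Aᵐᵒᵖ P) ≃ₗ[Aᵐᵒᵖ] ↥(socSub Aᵐᵒᵖ P)) →
      IsSimpleModule Aᵐᵒᵖ P := by
    rintro ⟨e⟩
    by_contra hns
    -- there is a maximal submodule
    haveI : IsCoatomic (Submodule Aᵐᵒᵖ P) := by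
      apply CompleteLattice.coatomic_of_top_compact
      rw [← Submodule.fg_iff_compact]
      exact Module.Finite.fg_top
    obtain ⟨m, hm, -⟩ : ∃ m, IsCoatom m ∧ (⊥ : Submodule Aᵐᵒᵖ P) ≤ m := by
      rcases eq_top_or_exists_le_coatom (⊥ : Submodule Aᵐᵒᵖ P) with h | h
      · exact absurd h.symm hind.1
      · exact h
    have hrad : radSub Aᵐᵒᵖ P ≤ m := jacobson_smul_top_le_coatom hm
    have hradne : radSub Aᵐᵒᵖ P ≠ ⊤ := by
      intro h
      exact hm.1 (top_le_iff.mp (h ▸ hrad))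
    obtain ⟨p, hp⟩ : ∃ p, p ∉ radSub Aᵐᵒᵖ P := by
      by_contra h
      push_neg at h
      exact hradne (Submodule.eq_top_iff'.mpr h)
    let f : P →ₗ[Aᵐᵒᵖ] P :=
      (socSub Aᵐᵒᵖ P).subtype ∘ₗ (e : (P ⧸ radSub Aᵐᵒᵖ P) →ₗ[Aᵐᵒᵖ] ↥(socSub Aᵐᵒᵖ P)) ∘ₗ
        (radSub Aᵐᵒᵖ P).mkQ
    have hf0 : f ≠ 0 := by
      intro h
      apply hp
      have hfp : f p = 0 := by rw [h]; rfl
      have : e (Submodule.Quotient.mk p) = 0 := by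
        have := hfp
        simp only [f, LinearMap.comp_apply, Submodule.mkQ_apply, Submodule.subtype_apply] at this
        exact_mod_cast Subtype.ext this
      have : (Submodule.Quotient.mk p : P ⧸ radSub Aᵐᵒᵖ P) = 0 := by
        have := congrArg e.symm this
        simpa using this
      rwa [Submodule.Quotient.mk_eq_zero] at this
    have hfnb : ¬Function.Bijective f := by
      intro hb
      have hsoc : socSub Aᵐᵒᵖ P = ⊤ := by
        rw [Submodule.eq_top_iff']
        intro x
        obtain ⟨y, hy⟩ := hb.2 x
        rw [← hy]
        exact (e (Submodule.Quotient.mk y)).2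
      haveI : IsSemisimpleModule Aᵐᵒᵖ P := IsSemisimpleModule.of_sSup_simples_eq_top hsoc
      obtain ⟨S, hS⟩ : ∃ S : Submodule Aᵐᵒᵖ P, IsSimpleModule Aᵐᵒᵖ S := by
        by_contra h
        push_neg at h
        have hempty : {S : Submodule Aᵐᵒᵖ P | IsSimpleModule Aᵐᵒᵖ S} = ∅ :=
          Set.eq_empty_iff_forall_notMem.mpr h
        rw [socSub, hempty, sSup_empty] at hsoc
        exact hind.1 hsoc.symm
      obtain ⟨N, hc⟩ := exists_isCompl S
      rcases hind.2 S N hc with h | h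
      · exact (isSimpleModule_iff_isAtom.mp hS).1 h
      · have hStop : S = ⊤ := by
          have := hc.sup_eq_top
          rwa [h, sup_bot_eq] at this
        rw [hStop] at hS
        haveI := hS
        exact hns (IsSimpleModule.congr (Submodule.topEquiv.symm))
    exact hnsc P P hind hind f f hf0 hfnb hf0 hfnb
  exact ⟨h1, fun _ hns hne => hns (h1 hne)⟩
end

section
/- Let A be a finite-dimensional selfinjective algebra, I an ideal, e a residual identity of B = A/I with IeI = 0 and l_A(I) = Ie. Then eIe equals both the left annihilator of I in eAe and the right annihilator of I in eAe, i.e. l_{eAe}(I) = eIe = r_{eAe}(I). -/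
/-!
Two of the four inclusions are `IeI = 0`, and `l_{eAe}(I) ⊆ eIe` is `l_A(I) = Ie`. For
`r_{eAe}(I) ⊆ eIe`, note that `x = exe` with `Ix = 0` satisfies `l_A(I) x = Iex = 0`, so it suffices
that `r_A(l_A(J)) = J` for every right ideal `J` of the right self-injective artinian ring `A`.

Given `x ∉ J`, a simple quotient of `A / {b | xb ∈ J}` embeds into `A_A` (Kasch property);
extending this embedding along `A / {b | xb ∈ J} ↪ A / J` by injectivity of `A_A` produces left
multiplication by some `c ∈ l_A(J)` with `cx ≠ 0`. The Kasch property is the Nakayama permutation: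
`A_A` is a finite sum of indecomposable projective-injective summands `P`, each uniform (simple
socle) and hollow (simple top); `P ↦ soc P` and `P ↦ top P` are injective on isomorphism classes and
every simple module is a top, so by finiteness every simple module is also a socle.
-/

universe u

theorem Setoid.exists_rel_of_forall_rel_iff {ι : Type*} [Finite ι] (r : Setoid ι) (τ : ι → ι)
    (hτ : ∀ i j, r (τ i) (τ j) ↔ r i j) (k : ι) : ∃ j, r (τ j) k := by
  have hinj : Function.Injective
      (Quotient.map τ fun i j => (hτ i j).mpr : Quotient r → Quotient r) := by
    rintro ⟨i⟩ ⟨j⟩ h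
    exact Quotient.sound ((hτ i j).mp (Quotient.exact h))
  obtain ⟨⟨j⟩, hj⟩ := Finite.injective_iff_surjective.mp hinj ⟦k⟧
  exact ⟨j, Quotient.exact hj⟩

namespace Module

variable {R : Type u} [Ring R] {M N : Type u} [AddCommGroup M] [Module R M]
  [AddCommGroup N] [Module R N]

variable (R M) in
def IsIndecomposable : Prop :=
  Nontrivial M ∧ ∀ p : Submodule R M, IsComplemented p → p = ⊥ ∨ p = ⊤

variable (R M) in
def IsUniform : Prop :=
  ∀ p q : Submodule R M, Disjoint p q → p = ⊥ ∨ q = ⊥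

variable (R M) in
def IsHollow : Prop :=
  ∀ p q : Submodule R M, Codisjoint p q → p = ⊤ ∨ q = ⊤

theorem IsIndecomposable.bijective_or_isNilpotent [IsArtinian R M] [IsNoetherian R M]
    (hM : IsIndecomposable R M) (f : Module.End R M) : Function.Bijective f ∨ IsNilpotent f := by
  obtain ⟨n, hn⟩ := Filter.eventually_atTop.mp f.eventually_isCompl_ker_pow_range_pow
  rcases hM.2 _ ⟨_, hn (n + 1) n.le_succ⟩ with h | h
  · refine .inl (IsArtinian.bijective_of_injective_endomorphism f ?_)
    have hinj : Function.Injective (f ^ n * f) := by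
      rw [← pow_succ, ← LinearMap.ker_eq_bot, h]
    exact Function.Injective.of_comp hinj
  · exact .inr ⟨n + 1, LinearMap.ker_eq_top.mp h⟩

theorem IsIndecomposable.isUniform [Module.Injective R M] [IsArtinian R M] [IsNoetherian R M]
    (hM : IsIndecomposable R M) : IsUniform R M := by
  intro p q hpq
  by_contra! h
  obtain ⟨x, hxp, hx0⟩ := p.ne_bot_iff.mp h.1
  obtain ⟨y, hyq, hy0⟩ := q.ne_bot_iff.mp h.2
  have hj : Function.Injective (p.subtype.coprod q.subtype) := by
    rw [← LinearMap.ker_eq_bot, LinearMap.ker_coprod_of_disjoint_range] <;> simp [hpq]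
  -- `F` is the identity on `p` and vanishes on `q`, so it is neither injective nor nilpotent.
  obtain ⟨F, hF⟩ := Module.Injective.extension_property R M _ M _ hj
    (p.subtype ∘ₗ LinearMap.fst R p q)
  have hFx : F x = x := by simpa using LinearMap.congr_fun hF (⟨x, hxp⟩, 0)
  have hFy : F y = 0 := by simpa using LinearMap.congr_fun hF (0, ⟨y, hyq⟩)
  rcases hM.bijective_or_isNilpotent F with hbij | ⟨n, hn⟩
  · exact hy0 (hbij.1 (by rw [hFy, map_zero]))
  · apply hx0
    rw [← Function.iterate_fixed hFx n, ← Module.End.pow_apply, hn, LinearMap.zero_apply]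

theorem IsIndecomposable.isHollow [Module.Projective R M] [IsArtinian R M] [IsNoetherian R M]
    (hM : IsIndecomposable R M) : IsHollow R M := by
  intro p q hpq
  by_contra! h
  have hs : Function.Surjective (q.mkQ ∘ₗ p.subtype) := by
    rw [← LinearMap.range_eq_top, LinearMap.range_comp, Submodule.range_subtype,
      Submodule.map_mkQ_eq_top, sup_comm, ← codisjoint_iff]
    exact hpq
  -- `F` maps into `p` and is the identity modulo `q`, so neither `F` nor `1 - F` is surjective.
  obtain ⟨β, hβ⟩ := Module.projective_lifting_property _ q.mkQ hs
  set F : Module.End R M := p.subtype ∘ₗ β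
  rcases hM.bijective_or_isNilpotent F with hbij | hnil
  · refine h.1 (eq_top_iff.mpr fun x _ => ?_)
    obtain ⟨y, rfl⟩ := hbij.2 x
    exact (β y).2
  · refine h.2 (eq_top_iff.mpr fun x _ => ?_)
    obtain ⟨y, rfl⟩ := ((Module.End.isUnit_iff _).mp hnil.isUnit_one_sub).2 x
    rw [← Submodule.Quotient.mk_eq_zero, LinearMap.sub_apply, Submodule.Quotient.mk_sub,
      sub_eq_zero]
    exact (LinearMap.congr_fun hβ y).symm

theorem isComplemented_range_of_injective [Module.Injective R M] (f : M →ₗ[R] N)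
    (hf : Function.Injective f) : IsComplemented (LinearMap.range f) := by
  let e := LinearEquiv.ofInjective f hf
  obtain ⟨r, hr⟩ := Module.Injective.extension_property R M _ N (LinearMap.range f).subtype
    (Submodule.injective_subtype _) e.symm.toLinearMap
  refine ⟨_, LinearMap.isCompl_of_proj (f := e.toLinearMap ∘ₗ r) fun x => ?_⟩
  have hrx : r x = e.symm x := LinearMap.congr_fun hr x
  rw [LinearMap.comp_apply, LinearEquiv.coe_coe, hrx, e.apply_symm_apply]

theorem Injective.of_isCompl [Module.Injective R M] {p q : Submodule R M} (h : IsCompl p q) :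
    Module.Injective R p where
  out _ _ _ _ _ _ f hf g := by
    obtain ⟨g', hg'⟩ := Module.Injective.out f hf (p.subtype ∘ₗ g)
    exact ⟨p.projectionOnto q h ∘ₗ g', fun x => by
      simp [hg', Submodule.projectionOnto_apply_left]⟩

theorem Projective.of_isCompl [Module.Projective R M] {p q : Submodule R M} (h : IsCompl p q) :
    Module.Projective R p :=
  .of_split p.subtype (p.projectionOnto q h) (by ext; simp [Submodule.projectionOnto_apply_left])

section Comparison

variable {S T : Type*} [AddCommGroup S] [Module R S] [AddCommGroup T] [Module R T]

theorem IsUniform.nonempty_linearEquiv_of_isSimpleModule (hM : IsUniform R M)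
    [IsSimpleModule R S] [IsSimpleModule R T] {f : S →ₗ[R] M} {g : T →ₗ[R] M}
    (hf : Function.Injective f) (hg : Function.Injective g) : Nonempty (S ≃ₗ[R] T) := by
  have hfa : IsAtom (LinearMap.range f) :=
    isSimpleModule_iff_isAtom.mp (.congr (LinearEquiv.ofInjective f hf).symm)
  have hga : IsAtom (LinearMap.range g) :=
    isSimpleModule_iff_isAtom.mp (.congr (LinearEquiv.ofInjective g hg).symm)
  have hfg : LinearMap.range f = LinearMap.range g := by
    by_contra hne
    rcases hM _ _ (hfa.disjoint_of_ne hga hne) with h | h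
    exacts [hfa.1 h, hga.1 h]
  exact ⟨(LinearEquiv.ofInjective f hf).trans
    ((LinearEquiv.ofEq _ _ hfg).trans (LinearEquiv.ofInjective g hg).symm)⟩

theorem IsHollow.nonempty_linearEquiv_of_isSimpleModule (hM : IsHollow R M)
    [IsSimpleModule R S] [IsSimpleModule R T] {f : M →ₗ[R] S} {g : M →ₗ[R] T}
    (hf : Function.Surjective f) (hg : Function.Surjective g) : Nonempty (S ≃ₗ[R] T) := by
  have hfc : IsCoatom (LinearMap.ker f) :=
    isSimpleModule_iff_isCoatom.mp (.congr (f.quotKerEquivOfSurjective hf))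
  have hgc : IsCoatom (LinearMap.ker g) :=
    isSimpleModule_iff_isCoatom.mp (.congr (g.quotKerEquivOfSurjective hg))
  have hfg : LinearMap.ker f = LinearMap.ker g := by
    by_contra hne
    rcases hM _ _ (hfc.codisjoint_of_ne hgc hne) with h | h
    exacts [hfc.1 h, hgc.1 h]
  exact ⟨(f.quotKerEquivOfSurjective hf).symm.trans
    ((Submodule.quotEquivOfEq _ _ hfg).trans (g.quotKerEquivOfSurjective hg))⟩

theorem IsUniform.nonempty_linearEquiv [Module.Injective R M] [Module.Injective R N]
    (hM : IsUniform R M) (hN : IsUniform R N) [Nontrivial S] {f : S →ₗ[R] M} {g : S →ₗ[R] N}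
    (hf : Function.Injective f) (hg : Function.Injective g) : Nonempty (M ≃ₗ[R] N) := by
  obtain ⟨φ, hφ⟩ := Module.Injective.extension_property R N S M f hf g
  have hdisj : Disjoint (LinearMap.ker φ) (LinearMap.range f) := by
    rw [Submodule.disjoint_def]
    rintro _ hx ⟨s, rfl⟩
    rw [LinearMap.mem_ker, ← LinearMap.comp_apply, hφ, ← map_zero g] at hx
    rw [hg hx, map_zero]
  have hf0 := LinearMap.range_eq_bot.not.mpr (LinearMap.ne_zero_of_injective hf)
  have hφinj : Function.Injective φ :=
    LinearMap.ker_eq_bot.mp ((hM _ _ hdisj).resolve_right hf0)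
  have hφ0 : LinearMap.range φ ≠ ⊥ := fun h =>
    LinearMap.range_eq_bot.not.mpr (LinearMap.ne_zero_of_injective hg)
      (eq_bot_iff.mpr (h ▸ hφ ▸ LinearMap.range_comp_le_range f φ))
  obtain ⟨C, hC⟩ := isComplemented_range_of_injective φ hφinj
  have hφtop : LinearMap.range φ = ⊤ :=
    eq_top_of_isCompl_bot ((hN _ _ hC.disjoint).resolve_left hφ0 ▸ hC)
  exact ⟨.ofBijective φ ⟨hφinj, LinearMap.range_eq_top.mp hφtop⟩⟩

theorem IsHollow.nonempty_linearEquiv [Module.Projective R M] [Module.Projective R N]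
    (hM : IsHollow R M) (hN : IsHollow R N) [Nontrivial S] {f : M →ₗ[R] S} {g : N →ₗ[R] S}
    (hf : Function.Surjective f) (hg : Function.Surjective g) : Nonempty (M ≃ₗ[R] N) := by
  obtain ⟨β, hβ⟩ := Module.projective_lifting_property g f hg
  have hcodisj : Codisjoint (LinearMap.range β) (LinearMap.ker g) := by
    refine codisjoint_iff.mpr (eq_top_iff.mpr fun y _ => ?_)
    obtain ⟨x, hx⟩ := hf (g y)
    refine Submodule.mem_sup.mpr ⟨β x, ⟨x, rfl⟩, y - β x, ?_, add_sub_cancel _ _⟩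
    rw [LinearMap.mem_ker, map_sub, ← LinearMap.comp_apply, hβ, hx, sub_self]
  have hg0 := LinearMap.ker_eq_top.not.mpr (LinearMap.ne_zero_of_surjective hg)
  have hβs : Function.Surjective β :=
    LinearMap.range_eq_top.mp ((hN _ _ hcodisj).resolve_right hg0)
  obtain ⟨σ, hσ⟩ := Module.projective_lifting_property β LinearMap.id hβs
  have hβσ (y : N) : β (σ y) = y := LinearMap.congr_fun hσ y
  have hsplit : Codisjoint (LinearMap.ker β) (LinearMap.range σ) := by
    refine codisjoint_iff.mpr (eq_top_iff.mpr fun x _ => ?_)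
    refine Submodule.mem_sup.mpr ⟨x - σ (β x), ?_, σ (β x), ⟨β x, rfl⟩, sub_add_cancel _ _⟩
    rw [LinearMap.mem_ker, map_sub, hβσ, sub_self]
  rcases hM _ _ hsplit with h | h
  · refine absurd ?_ (LinearMap.ne_zero_of_surjective hf)
    rw [← hβ, LinearMap.ker_eq_top.mp h, LinearMap.comp_zero]
  · have hσs : Function.Surjective σ := LinearMap.range_eq_top.mp h
    refine ⟨.ofBijective β ⟨fun x y hxy => ?_, hβs⟩⟩
    obtain ⟨x, rfl⟩ := hσs x
    obtain ⟨y, rfl⟩ := hσs y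
    rw [hβσ, hβσ] at hxy
    rw [hxy]

end Comparison

theorem exists_lt_sup_eq_of_not_isIndecomposable {W : Submodule R M}
    (hW : IsComplemented W) (hW0 : W ≠ ⊥) (h : ¬ IsIndecomposable R W) :
    ∃ U V : Submodule R M, U < W ∧ V < W ∧ IsComplemented U ∧ IsComplemented V ∧ U ⊔ V = W := by
  have hlt (p : Submodule R W) (hp : p ≠ ⊤) : p.map W.subtype < W := by
    refine lt_of_le_of_ne (Submodule.map_subtype_le W p) fun h => hp ?_
    rw [← Submodule.comap_map_eq_of_injective W.injective_subtype p, h,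
      Submodule.comap_subtype_self]
  have : Nontrivial W := Submodule.nontrivial_iff_ne_bot.mpr hW0
  obtain ⟨p, ⟨q, hpq⟩, hp0, hp⟩ : ∃ p : Submodule R W, IsComplemented p ∧ p ≠ ⊥ ∧ p ≠ ⊤ := by
    simpa [IsIndecomposable, this, not_or] using h
  have hq : q ≠ ⊤ := fun h => hp0 (eq_bot_of_isCompl_top (h ▸ hpq))
  obtain ⟨hdisj, hsup⟩ := Set.Iic.isCompl_iff.mp ((OrderIso.isCompl_iff W.mapIic).mp hpq)
  obtain ⟨Q, hQ⟩ := hW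
  simp only [Submodule.coe_mapIic_apply] at hdisj hsup
  exact ⟨_, _, hlt p hp, hlt q hq,
    ⟨_, hdisj.isCompl_sup_right_of_isCompl_sup_left (by rwa [hsup])⟩,
    ⟨_, hdisj.symm.isCompl_sup_right_of_isCompl_sup_left (by rwa [sup_comm, hsup])⟩, hsup⟩

theorem exists_finset_isIndecomposable_sSup_eq [IsArtinian R M] {W : Submodule R M}
    (hW : IsComplemented W) : ∃ s : Finset (Submodule R M), sSup (s : Set (Submodule R M)) = W ∧
      ∀ p ∈ s, IsComplemented p ∧ IsIndecomposable R p := by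
  classical
  induction W using WellFoundedLT.induction with
  | _ W ih =>
  by_cases hW0 : W = ⊥
  · exact ⟨∅, by simp [hW0], by simp⟩
  by_cases hind : IsIndecomposable R W
  · exact ⟨{W}, by simp, by simpa using ⟨hW, hind⟩⟩
  obtain ⟨U, V, hU, hV, hUc, hVc, hUV⟩ := exists_lt_sup_eq_of_not_isIndecomposable hW hW0 hind
  obtain ⟨s, hs, hsP⟩ := ih U hU hUc
  obtain ⟨t, ht, htP⟩ := ih V hV hVc
  refine ⟨s ∪ t, by rw [Finset.coe_union, sSup_union, hs, ht, hUV], fun p hp => ?_⟩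
  rcases Finset.mem_union.mp hp with h | h
  exacts [hsP p h, htP p h]

theorem exists_mem_surjective_comp_subtype {S : Type*} [AddCommGroup S] [Module R S]
    [IsSimpleModule R S] {s : Set (Submodule R M)} (hs : sSup s = ⊤) {g : M →ₗ[R] S}
    (hg : g ≠ 0) : ∃ p ∈ s, Function.Surjective (g ∘ₗ p.subtype) := by
  by_contra! h
  refine hg (LinearMap.ker_eq_top.mp (eq_top_iff.mpr (hs ▸ sSup_le fun p hp x hx => ?_)))
  exact LinearMap.congr_fun ((g ∘ₗ p.subtype).surjective_or_eq_zero.resolve_left (h p hp)) ⟨x, hx⟩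

theorem exists_isSimpleModule_submodule [IsArtinian R M] [Nontrivial M] :
    ∃ T : Submodule R M, IsSimpleModule R T := by
  obtain ⟨T, hT⟩ := IsAtomic.exists_atom (Submodule R M)
  exact ⟨T, isSimpleModule_iff_isAtom.mpr hT⟩

theorem exists_injective_of_surjective {ι : Type*} [Finite ι] (P : ι → Type u)
    [∀ i, AddCommGroup (P i)] [∀ i, Module R (P i)] [∀ i, Module.Injective R (P i)]
    [∀ i, Module.Projective R (P i)] (hU : ∀ i, IsUniform R (P i)) (hH : ∀ i, IsHollow R (P i))
    (T : ∀ i, Submodule R (P i)) [∀ i, IsSimpleModule R (T i)]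
    (hT : ∀ i, ∃ j, ∃ g : P j →ₗ[R] T i, Function.Surjective g)
    {S : Type*} [AddCommGroup S] [Module R S] [IsSimpleModule R S] {i₀ : ι}
    {g : P i₀ →ₗ[R] S} (hg : Function.Surjective g) :
    ∃ j, ∃ f : S →ₗ[R] P j, Function.Injective f := by
  have (i : ι) : Nontrivial (T i) := IsSimpleModule.nontrivial R _
  choose τ t ht using hT
  let r : Setoid ι := ⟨fun i j => Nonempty (P i ≃ₗ[R] P j),
    ⟨fun _ => ⟨.refl R _⟩, fun ⟨e⟩ => ⟨e.symm⟩, fun ⟨e⟩ ⟨e'⟩ => ⟨e.trans e'⟩⟩⟩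
  -- `τ` induces a permutation of the isomorphism classes: the Nakayama permutation.
  have hτ : ∀ i j, r (τ i) (τ j) ↔ r i j := by
    refine fun i j => ⟨fun ⟨e⟩ => ?_, fun ⟨e⟩ => ?_⟩
    · obtain ⟨eT⟩ := (hH (τ j)).nonempty_linearEquiv_of_isSimpleModule
        (f := t i ∘ₗ e.symm.toLinearMap) ((ht i).comp e.symm.surjective) (ht j)
      exact (hU i).nonempty_linearEquiv (hU j) (T i).injective_subtype
        (g := (T j).subtype ∘ₗ eT.toLinearMap) ((T j).injective_subtype.comp eT.injective)
    · obtain ⟨eT⟩ := (hU j).nonempty_linearEquiv_of_isSimpleModule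
        (f := e.toLinearMap ∘ₗ (T i).subtype) (e.injective.comp (T i).injective_subtype)
        (T j).injective_subtype
      exact (hH (τ i)).nonempty_linearEquiv (hH (τ j))
        (f := eT.toLinearMap ∘ₗ t i) (eT.surjective.comp (ht i)) (ht j)
  obtain ⟨j, ⟨e⟩⟩ := r.exists_rel_of_forall_rel_iff τ hτ i₀
  obtain ⟨eS⟩ := (hH i₀).nonempty_linearEquiv_of_isSimpleModule hg
    (g := t j ∘ₗ e.symm.toLinearMap) ((ht j).comp e.symm.surjective)
  exact ⟨j, (T j).subtype ∘ₗ eS.toLinearMap, (T j).injective_subtype.comp eS.injective⟩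

end Module

open Module MulOpposite

section RightSelfInjective

variable {A : Type u} [Ring A]

theorem LinearMap.apply_eq_apply_one_mul (f : A →ₗ[Aᵐᵒᵖ] A) (a : A) : f a = f 1 * a := by
  simpa using f.map_smul (op a) 1

variable [IsArtinian Aᵐᵒᵖ A] [IsNoetherian Aᵐᵒᵖ A] [Module.Injective Aᵐᵒᵖ A]

theorem exists_injective_of_isSimpleModule (S : Type u) [AddCommGroup S] [Module Aᵐᵒᵖ S]
    [IsSimpleModule Aᵐᵒᵖ S] : ∃ f : S →ₗ[Aᵐᵒᵖ] A, Function.Injective f := by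
  obtain ⟨s, hs, hsP⟩ := exists_finset_isIndecomposable_sSup_eq (R := Aᵐᵒᵖ) (M := A)
    isComplemented_top
  have hquot (T : Type u) [AddCommGroup T] [Module Aᵐᵒᵖ T] [IsSimpleModule Aᵐᵒᵖ T] :
      ∃ p : s, ∃ g : (p : Submodule Aᵐᵒᵖ A) →ₗ[Aᵐᵒᵖ] T, Function.Surjective g := by
    have : Nontrivial T := IsSimpleModule.nontrivial Aᵐᵒᵖ T
    obtain ⟨t, ht⟩ := exists_ne (0 : T)
    let g : A →ₗ[Aᵐᵒᵖ] T :=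
      LinearMap.toSpanSingleton Aᵐᵒᵖ T t ∘ₗ (opLinearEquiv Aᵐᵒᵖ).toLinearMap
    have hg : g ≠ 0 := fun h => ht (by simpa [g] using LinearMap.congr_fun h 1)
    obtain ⟨p, hp, hsurj⟩ := exists_mem_surjective_comp_subtype hs hg
    exact ⟨⟨p, hp⟩, _, hsurj⟩
  have : Module.Projective Aᵐᵒᵖ A := .of_equiv (opLinearEquiv Aᵐᵒᵖ).symm
  have hind (p : s) := (hsP p p.2).2
  have (p : s) : Module.Injective Aᵐᵒᵖ p := Injective.of_isCompl (hsP p p.2).1.choose_spec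
  have (p : s) : Module.Projective Aᵐᵒᵖ p := Projective.of_isCompl (hsP p p.2).1.choose_spec
  have (p : s) : Nontrivial p := (hind p).1
  choose T hT using fun p : s => exists_isSimpleModule_submodule (R := Aᵐᵒᵖ) (M := p)
  obtain ⟨p₀, g, hg⟩ := hquot S
  obtain ⟨p, f, hf⟩ := exists_injective_of_surjective (fun p : s => (p : Submodule Aᵐᵒᵖ A))
    (fun p => (hind p).isUniform) (fun p => (hind p).isHollow) T (fun p => hquot (T p)) hg
  exact ⟨(p : Submodule Aᵐᵒᵖ A).subtype ∘ₗ f, Subtype.val_injective.comp hf⟩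

theorem mem_of_forall_mul_eq_zero (J : Submodule Aᵐᵒᵖ A) {x : A}
    (hx : ∀ a : A, (∀ y ∈ J, a * y = 0) → a * x = 0) : x ∈ J := by
  by_contra hxJ
  let φ : A →ₗ[Aᵐᵒᵖ] A ⧸ J := J.mkQ ∘ₗ DistribSMul.toLinearMap Aᵐᵒᵖ A x
  have hφ : LinearMap.ker φ ≠ ⊤ := fun h => by
    have h1 : (1 : A) ∈ LinearMap.ker φ := h ▸ Submodule.mem_top
    exact hxJ (by simpa [φ] using h1)
  obtain ⟨m, hm, hφm⟩ := (eq_top_or_exists_le_coatom (LinearMap.ker φ)).resolve_left hφ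
  have := isSimpleModule_iff_isCoatom.mpr hm
  obtain ⟨ι, hι⟩ := exists_injective_of_isSimpleModule (A := A) (A ⧸ m)
  -- `h` extends `A ⧸ ker φ ↠ A ⧸ m ↪ A` along the embedding `A ⧸ ker φ ↪ A ⧸ J` induced by `φ`.
  obtain ⟨h, hh⟩ := Module.Injective.extension_property Aᵐᵒᵖ A _ _
    ((LinearMap.ker φ).liftQ φ le_rfl)
    (LinearMap.ker_eq_bot.mp (Submodule.ker_liftQ_eq_bot' _ φ rfl)) (ι ∘ₗ Submodule.factor hφm)
  let c := h (J.mkQ 1)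
  have hc (a : A) : h (J.mkQ a) = c * a := LinearMap.apply_eq_apply_one_mul (h ∘ₗ J.mkQ) a
  have hcJ (y : A) (hy : y ∈ J) : c * y = 0 := by
    rw [← hc, Submodule.mkQ_apply, (Submodule.Quotient.mk_eq_zero J).mpr hy, map_zero]
  have h1 : (Submodule.Quotient.mk 1 : A ⧸ m) ≠ 0 := by
    rw [ne_eq, Submodule.Quotient.mk_eq_zero]
    exact fun h1 => hm.1 (eq_top_iff.mpr fun b _ => by simpa using m.smul_mem (op b) h1)
  refine hι.ne h1 ?_
  calc ι (Submodule.Quotient.mk 1) = h (φ 1) :=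
        (LinearMap.congr_fun hh (Submodule.Quotient.mk 1)).symm
    _ = c * x := by simpa [φ] using hc x
    _ = 0 := hx c hcJ
    _ = ι 0 := (map_zero ι).symm

end RightSelfInjective

theorem stmt_15_general (K A : Type) [Field K] [Ring A] [Algebra K A] [FiniteDimensional K A]
    (hself : Module.Injective Aᵐᵒᵖ A)
    (I : TwoSidedIdeal A) (e : A) (he : e * e = e)
    (hIeI : ∀ x ∈ I, ∀ y ∈ I, x * e * y = 0)
    (hl : {a : A | ∀ x ∈ I, a * x = 0} = {y : A | ∃ x ∈ I, y = x * e}) :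
    {x : A | x = e * x * e ∧ ∀ y ∈ I, x * y = 0} = {z : A | ∃ y ∈ I, z = e * y * e} ∧
    {x : A | x = e * x * e ∧ ∀ y ∈ I, y * x = 0} = {z : A | ∃ y ∈ I, z = e * y * e} := by
  have : IsArtinian Aᵐᵒᵖ A := isArtinian_of_tower K inferInstance
  have : IsNoetherian Aᵐᵒᵖ A := isNoetherian_of_tower K inferInstance
  have hlI (a : A) : (∀ x ∈ I, a * x = 0) ↔ ∃ u ∈ I, a = u * e := Set.ext_iff.mp hl a
  have hcorner (y : A) : e * y * e = e * (e * y * e) * e := by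
    simp only [← mul_assoc, he]
    rw [mul_assoc _ e e, he]
  refine ⟨Set.ext fun x => ⟨?_, ?_⟩, Set.ext fun x => ⟨?_, ?_⟩⟩
  · rintro ⟨hx, hxI⟩
    obtain ⟨u, hu, rfl⟩ := (hlI x).mp hxI
    exact ⟨u, hu, by rw [hx]; simp only [mul_assoc, he]⟩
  · rintro ⟨y, hy, rfl⟩
    exact ⟨hcorner y, fun z hz => by simpa [mul_assoc] using congrArg (e * ·) (hIeI y hy z hz)⟩
  · rintro ⟨hx, hIx⟩
    have hex : e * x = x := by rw [hx, ← mul_assoc, ← mul_assoc, he]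
    let J : Submodule Aᵐᵒᵖ A := .comap (opLinearEquiv Aᵐᵒᵖ).toLinearMap I.asIdealOpposite
    have hJ (y : A) : y ∈ J ↔ y ∈ I := Submodule.mem_comap.trans TwoSidedIdeal.mem_asIdealOpposite
    refine ⟨x, (hJ x).mp (mem_of_forall_mul_eq_zero J fun a ha => ?_), hx⟩
    obtain ⟨u, hu, rfl⟩ := (hlI a).mp fun y hy => ha y ((hJ y).mpr hy)
    rw [mul_assoc, hex, hIx u hu]
  · rintro ⟨y, hy, rfl⟩
    exact ⟨hcorner y, fun z hz => by simpa [mul_assoc] using congrArg (· * e) (hIeI z hz y hy)⟩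

/-- Let `A` be a finite-dimensional selfinjective `K`-algebra, `I` a
two-sided ideal, `e` a residual identity of `B = A/I` with `IeI = 0` and
`l_A(I) = Ie`.  Then `eIe` equals both the left annihilator of `I` in the corner
ring `eAe = {x | x = e*x*e}` and the right annihilator of `I` in `eAe`:
`l_{eAe}(I) = eIe = r_{eAe}(I)`. -/
theorem stmt_15 (K A : Type) [Field K] [Ring A] [Algebra K A] [FiniteDimensional K A]
    (hself : Module.Injective Aᵐᵒᵖ A)
    (I : TwoSidedIdeal A) (e : A) (he : e * e = e)
    (hres : ∀ a : A, a * e - a ∈ I ∧ e * a - a ∈ I)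
    (hIeI : ∀ x ∈ I, ∀ y ∈ I, x * e * y = 0)
    (hl : {a : A | ∀ x ∈ I, a * x = 0} = {y : A | ∃ x ∈ I, y = x * e}) :
    {x : A | x = e * x * e ∧ ∀ y ∈ I, x * y = 0} = {z : A | ∃ y ∈ I, z = e * y * e} ∧
    {x : A | x = e * x * e ∧ ∀ y ∈ I, y * x = 0} = {z : A | ∃ y ∈ I, z = e * y * e} :=
  stmt_15_general K A hself I e he hIeI hl
end

section
/- Let A be a finite-dimensional algebra over a field K whose module category mod A has no short cycles, and let P be an indecomposable projective-injective A-module which is not simple. Then there is no nonzero homomorphism from P to itself whose image is the socle of P; equivalently soc(P) is not a quotient of top(P), so soc(P) ≇ top(P). -/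
/-! Without short cycles every nonzero endomorphism `φ` of an indecomposable module is an
isomorphism, since otherwise `P →φ P →φ P` is a short cycle. An endomorphism with image `soc P`
is not surjective, because `P` is indecomposable and not simple, hence not semisimple. An
isomorphism `soc P ≅ top P` gives such an endomorphism `P ↠ top P ≅ soc P ↪ P`, nonzero because
the socle of a nonzero finite-dimensional module is nonzero. -/

section Socle

variable {R M : Type} [Ring R] [AddCommGroup M] [Module R M]

theorem IsIndecomposableModule.nontrivial (h : IsIndecomposableModule R M) : Nontrivial M :=
  (Submodule.nontrivial_iff R).1 (nontrivial_of_ne _ _ h.1)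

theorem IsIndecomposableModule.isSimpleModule [IsSemisimpleModule R M]
    (h : IsIndecomposableModule R M) : IsSimpleModule R M := by
  have : Nontrivial (Submodule R M) := nontrivial_of_ne _ _ h.1
  refine { eq_bot_or_eq_top := fun N => ?_ }
  obtain ⟨N', hNN'⟩ := exists_isCompl N
  refine (h.2 N N' hNN').imp_right fun hN' => ?_
  simpa [hN'] using hNN'.sup_eq_top

theorem IsIndecomposableModule.socSub_ne_top (h : IsIndecomposableModule R M)
    (hns : ¬IsSimpleModule R M) : socSub R M ≠ ⊤ := fun htop =>
  have := IsSemisimpleModule.of_sSup_simples_eq_top htop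
  hns h.isSimpleModule

theorem socSub_ne_bot [IsArtinian R M] [Nontrivial M] : socSub R M ≠ ⊥ := by
  obtain ⟨S, hS⟩ := IsAtomic.exists_atom (Submodule R M)
  exact ne_bot_of_le_ne_bot hS.1 (le_sSup (isSimpleModule_iff_isAtom.2 hS))

theorem range_subtype_comp_mkQ (N S : Submodule R M) (e : (M ⧸ N) ≃ₗ[R] S) :
    LinearMap.range (S.subtype ∘ₗ e.toLinearMap ∘ₗ N.mkQ) = S := by
  rw [LinearMap.range_comp, LinearMap.range_comp, N.range_mkQ, Submodule.map_top, e.range,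
    Submodule.map_top, Submodule.range_subtype]

end Socle

theorem NoShortCycles.bijective_of_ne_zero {K A : Type} [Field K] [Ring A] [Algebra K A]
    (hnsc : NoShortCycles K A) {X : Type} [AddCommGroup X] [Module Aᵐᵒᵖ X] [Module K X]
    [IsScalarTower K Aᵐᵒᵖ X] [FiniteDimensional K X] (hX : IsIndecomposableModule Aᵐᵒᵖ X)
    {f : X →ₗ[Aᵐᵒᵖ] X} (hf : f ≠ 0) : Function.Bijective f :=
  by_contra fun hbij => hnsc X X hX hX f f hf hbij hf hbij

theorem stmt_16_general (K A : Type) [Field K] [Ring A] [Algebra K A]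
    (hnsc : NoShortCycles K A)
    (P : Type) [AddCommGroup P] [Module Aᵐᵒᵖ P] [Module K P]
    [IsScalarTower K Aᵐᵒᵖ P] [FiniteDimensional K P]
    (hind : IsIndecomposableModule Aᵐᵒᵖ P) (hns : ¬IsSimpleModule Aᵐᵒᵖ P) :
    (∀ φ : P →ₗ[Aᵐᵒᵖ] P, φ ≠ 0 → LinearMap.range φ ≠ socSub Aᵐᵒᵖ P) ∧
    ¬Nonempty (↥(socSub Aᵐᵒᵖ P) ≃ₗ[Aᵐᵒᵖ] (P ⧸ radSub Aᵐᵒᵖ P)) := by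
  have range_ne_socSub (φ : P →ₗ[Aᵐᵒᵖ] P) (hφ : φ ≠ 0) : LinearMap.range φ ≠ socSub Aᵐᵒᵖ P :=
    fun hφsoc => hind.socSub_ne_top hns <|
      hφsoc ▸ LinearMap.range_eq_top.2 (hnsc.bijective_of_ne_zero hind hφ).2
  refine ⟨range_ne_socSub, fun ⟨e⟩ => ?_⟩
  have : IsArtinian Aᵐᵒᵖ P := isArtinian_of_tower K inferInstance
  have := hind.nontrivial
  set ψ := (socSub Aᵐᵒᵖ P).subtype ∘ₗ e.symm.toLinearMap ∘ₗ (radSub Aᵐᵒᵖ P).mkQ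
  have hψ : LinearMap.range ψ = socSub Aᵐᵒᵖ P := range_subtype_comp_mkQ _ _ e.symm
  refine range_ne_socSub ψ (fun hψ0 => socSub_ne_bot (R := Aᵐᵒᵖ) (M := P) ?_) hψ
  rw [← hψ, hψ0, LinearMap.range_zero]

/-- Let `A` be a finite-dimensional algebra over `K` whose module
category has no short cycles, and let `P` be an indecomposable projective-injective
finite-dimensional right `A`-module which is not simple.  Then no nonzero endomorphism
of `P` has image equal to `soc P`; equivalently `soc P` is not a quotient of `top P`,
so `soc P ≇ top P`. -/
theorem stmt_16 (K A : Type) [Field K] [Ring A] [Algebra K A] [FiniteDimensional K A]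
    (hnsc : NoShortCycles K A)
    (P : Type) [AddCommGroup P] [Module Aᵐᵒᵖ P] [Module K P]
    [IsScalarTower K Aᵐᵒᵖ P] [FiniteDimensional K P]
    (hproj : Module.Projective Aᵐᵒᵖ P) (hinj : Module.Injective Aᵐᵒᵖ P)
    (hind : IsIndecomposableModule Aᵐᵒᵖ P) (hns : ¬IsSimpleModule Aᵐᵒᵖ P) :
    (∀ φ : P →ₗ[Aᵐᵒᵖ] P, φ ≠ 0 → LinearMap.range φ ≠ socSub Aᵐᵒᵖ P) ∧
    ¬Nonempty (↥(socSub Aᵐᵒᵖ P) ≃ₗ[Aᵐᵒᵖ] (P ⧸ radSub Aᵐᵒᵖ P)) :=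
  stmt_16_general K A hnsc P hind hns
end
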